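/- arXiv:1602.01304 — 5 statements merged into one kernel-verified Lean document; each statement's English description precedes it below -/
import Mathlib

section
/- For every nonnegative integer n, the determinant of the n×n matrix with (i,j) entry 1/(2i+2j−1) (for 1 ≤ i,j ≤ n) equals (1/2^n) · Π_{i=1}^n ((i−1)!)² / (i+1/2)_n. -/
/-!
Cauchy's determinant identity `det (1 / (x i + y j)) * ∏ i, ∏ j, (x i + y j) = V(x) * V(y)`,
with `V` the Vandermonde determinant, applied to `x i = i + 3/2`, `y j = j` after factoring out
`1/2` from every row: both Vandermonde determinants are `∏_{i<n} i!`, and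
`∏ j, (x i + y j) = (i + 3/2)_n`.

For Cauchy's identity, multiply row `i` by `∏ k, (x i + y k)`: the entries become `P j (x i)`
with `P j = ∏_{k ≠ j} (X + y k)`, so the matrix is `V(x) * B` for the coefficient matrix `B` of
the `P j`. Evaluating at the points `-y i` instead gives `V(-y) * B`, which is diagonal since
`P j` vanishes at `-y i` for `i ≠ j`; comparing determinants yields `det B = V(y)`.
-/

open Finset Matrix Polynomial

theorem ascPochhammer_eval_eq_prod_range {R : Type*} [CommSemiring R] (n : ℕ) (r : R) :
    (ascPochhammer R n).eval r = ∏ k ∈ range n, (r + k) := by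
  induction n with
  | zero => simp
  | succ n ih => rw [ascPochhammer_succ_eval, prod_range_succ, ih]

theorem Finset.prod_prod_erase_eq_prod_Ioi_mul_prod_Ioi {ι M : Type*} [CommMonoid M]
    [LinearOrder ι] [Fintype ι] [LocallyFiniteOrderBot ι] [LocallyFiniteOrderTop ι]
    (f : ι → ι → M) :
    ∏ i, ∏ j ∈ univ.erase i, f i j = (∏ i, ∏ j ∈ Ioi i, f i j) * ∏ i, ∏ j ∈ Ioi i, f j i := by
  have hsplit : ∀ i : ι, univ.erase i = Iio i ∪ Ioi i := fun i => by
    ext j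
    simp only [mem_erase, mem_univ, and_true, mem_union, mem_Iio, mem_Ioi]
    exact ne_iff_lt_or_gt
  have hswap : ∏ i, ∏ j ∈ Iio i, f i j = ∏ i, ∏ j ∈ Ioi i, f j i :=
    prod_comm' fun i j => by simp
  simp_rw [hsplit, prod_union (disjoint_Ioi_Iio _).symm, prod_mul_distrib, hswap, mul_comm]

namespace Matrix

section CommRing

variable {R : Type*} [CommRing R] {n : ℕ}

theorem of_eval_eq_vandermonde_mul_of_coeff (v : Fin n → R) (p : Fin n → R[X])
    (hp : ∀ j, (p j).natDegree < n) :
    of (fun i j => (p j).eval (v i)) = vandermonde v * of (fun k j : Fin n => (p j).coeff k) := by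
  ext i j
  rw [of_apply, eval_eq_sum_range' (hp j), mul_apply,
    ← Fin.sum_univ_eq_sum_range (fun k => (p j).coeff k * v i ^ k)]
  simp [mul_comm]

theorem prod_prod_erase_sub_eq_det_vandermonde_mul (y : Fin n → R) :
    ∏ j, ∏ k ∈ univ.erase j, (y k - y j) = det (vandermonde y) * det (vandermonde (-y)) := by
  simp [prod_prod_erase_eq_prod_Ioi_mul_prod_Ioi, det_vandermonde, neg_add_eq_sub]

theorem det_vandermonde_natCast (n : ℕ) :
    det (vandermonde fun i : Fin n => (i : R)) = ∏ i ∈ range n, (i.factorial : R) := by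
  cases n with
  | zero => simp
  | succ m =>
    rw [det_vandermonde_id_eq_superFactorial, ← Nat.prod_range_succ_factorial]
    push_cast
    rfl

end CommRing

section Field

variable {K : Type*} [Field K] {n : ℕ}

theorem det_cauchy_mul_prod (x y : Fin n → K) (hxy : ∀ i j, x i + y j ≠ 0) :
    det (of fun i j => (x i + y j)⁻¹) * ∏ i, ∏ j, (x i + y j) =
      det (vandermonde x) * det (vandermonde y) := by
  by_cases hy : Function.Injective y
  swap
  · obtain ⟨j, j', hyj, hjj'⟩ : ∃ j j', y j = y j' ∧ j ≠ j' := by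
      simpa [Function.Injective, and_comm] using hy
    rw [det_zero_of_column_eq hjj' (by simp [hyj]),
      det_vandermonde_eq_zero_iff.2 ⟨j, j', hyj, hjj'⟩, zero_mul, mul_zero]
  set P : Fin n → K[X] := fun j => Lagrange.nodal (univ.erase j) (-y)
  have hdeg : ∀ j, (P j).natDegree < n := fun j => by
    simp only [P, Lagrange.natDegree_nodal, card_erase_of_mem (mem_univ j), card_univ,
      Fintype.card_fin]
    exact Nat.sub_lt j.pos one_pos
  have hx : of (fun i j => (P j).eval (x i)) =
      diagonal (fun i => ∏ k, (x i + y k)) * of fun i j => (x i + y j)⁻¹ := by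
    ext i j
    simp only [P, Lagrange.eval_nodal, Pi.neg_apply, sub_neg_eq_add, of_apply, diagonal_mul,
      ← mul_prod_erase univ _ (mem_univ j)]
    rw [mul_right_comm, mul_inv_cancel₀ (hxy i j), one_mul]
  have hy' : of (fun i j => (P j).eval ((-y) i)) =
      diagonal (fun j => ∏ k ∈ univ.erase j, (y k - y j)) := by
    ext i j
    obtain rfl | hij := eq_or_ne i j
    · simp [P, Lagrange.eval_nodal, neg_add_eq_sub]
    · rw [of_apply, diagonal_apply_ne _ hij]
      exact Lagrange.eval_nodal_at_node (mem_erase.2 ⟨hij, mem_univ i⟩)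
  have hV : det (vandermonde (-y)) ≠ 0 :=
    det_vandermonde_ne_zero_iff.2 fun a b h => hy (neg_injective h)
  have hx_det := congrArg det (hx.symm.trans (of_eval_eq_vandermonde_mul_of_coeff x P hdeg))
  have hy_det := congrArg det (of_eval_eq_vandermonde_mul_of_coeff (-y) P hdeg)
  rw [det_mul, det_diagonal, det_mul] at hx_det
  rw [hy', det_diagonal, prod_prod_erase_sub_eq_det_vandermonde_mul, det_mul] at hy_det
  rw [mul_comm, hx_det, mul_left_cancel₀ hV ((mul_comm _ _).trans hy_det).symm]

end Field

end Matrix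

/-- `det_{1≤i,j≤n} (1/(2i+2j−1)) = (1/2^n) Π_{i=1}^n ((i−1)!)² / (i+1/2)_n`. -/
theorem det_cauchy0 (n : ℕ) :
    Matrix.det (Matrix.of (fun i j : Fin n =>
      (1 : ℝ) / (2 * ((i : ℕ) + 1 : ℝ) + 2 * ((j : ℕ) + 1 : ℝ) - 1)))
    = (1 / 2 ^ n) * ∏ i ∈ Finset.range n,
        ((Nat.factorial i : ℝ) ^ 2 /
          (ascPochhammer ℝ n).eval (((i : ℝ) + 1) + 1 / 2)) := by
  set x : Fin n → ℝ := fun i => i + 3 / 2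
  set y : Fin n → ℝ := fun j => j
  have hxy : ∀ i j, x i + y j ≠ 0 := fun i j => by positivity
  have hM : of (fun i j : Fin n => (1 : ℝ) / (2 * ((i : ℕ) + 1 : ℝ) + 2 * ((j : ℕ) + 1 : ℝ) - 1))
      = (1 / 2 : ℝ) • of fun i j => (x i + y j)⁻¹ := by
    ext i j
    rw [of_apply, Matrix.smul_apply, of_apply, smul_eq_mul, one_div, one_div, ← mul_inv]
    ring
  have hprod : ∏ i, ∏ j, (x i + y j) =
      ∏ i ∈ range n, (ascPochhammer ℝ n).eval ((i : ℝ) + 1 + 1 / 2) := by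
    simp only [x, y, ascPochhammer_eval_eq_prod_range, ← Fin.prod_univ_eq_prod_range]
    ring_nf
  have hdet : det (of fun i j => (x i + y j)⁻¹) = (∏ i ∈ range n, (i.factorial : ℝ)) ^ 2 /
      ∏ i ∈ range n, (ascPochhammer ℝ n).eval ((i : ℝ) + 1 + 1 / 2) := by
    rw [← hprod, eq_div_iff (prod_ne_zero_iff.2 fun i _ => prod_ne_zero_iff.2 fun j _ => hxy i j),
      det_cauchy_mul_prod x y hxy, det_vandermonde_add, det_vandermonde_natCast, sq]
  rw [hM, det_smul, Fintype.card_fin, hdet, prod_div_distrib, prod_pow, _root_.one_div_pow]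
end

section
/- For all integers n ≥ 1 and all real (or indeterminate) λ, the polynomials F_{2n}(λ) satisfy the second-order recurrence (4n+3)·F_{2n+4}(λ) + (4n+5)·(16n²+40n−2λ+21)·F_{2n+2}(λ) + (4n+7)·λ²·F_{2n}(λ) = 0. -/
/-!
Writing `m = j + k`, the coefficient of `λ^j` in `F_{2m}` is
`c(j, k) = (2j + 4k)! / ((-4)^k (2k)! (2j)!)`, so `F_{2m}(λ)` is a sum over the antidiagonal
`j + k = m`. The polynomials `F_{2n+2}`, `λ F_{2n+2}` and `λ² F_{2n}` can all be re-indexed over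
the antidiagonal `j + k = n + 2`, with `c(j, k)` multiplied by a ratio of descending factorials;
these ratios vanish exactly on the terms that have no partner. The recurrence then reduces,
term by term, to an identity between rational functions of `j` and `k`.
-/

/-- The polynomial `F_n(λ)` from the paper:
`F_n(λ) = Σ_{j=0}^{ν} (−4)^{j−ν} ((2ν−2j+1)_n / (2j−2ν+n)!) λ^j` with `ν = ⌊n/2⌋`. -/
noncomputable def Fpoly (n : ℕ) (x : ℝ) : ℝ :=
  ∑ j ∈ Finset.range (n / 2 + 1),
    (-4 : ℝ) ^ ((j : ℤ) - ((n / 2 : ℕ) : ℤ)) *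
      ((ascPochhammer ℝ n).eval (2 * ((n / 2 : ℕ) : ℝ) - 2 * (j : ℝ) + 1) /
        (Nat.factorial (n - (2 * (n / 2) - 2 * j)) : ℝ)) * x ^ j

open Finset
open scoped Nat

theorem Nat.cast_factorial_add {R : Type*} [CommSemiring R] (a r : ℕ) :
    ((a + r)! : R) = (a + r).descFactorial r * a ! := by
  rw [← Nat.factorial_mul_descFactorial (Nat.le_add_left r a), Nat.add_sub_cancel, Nat.cast_mul,
    mul_comm]

theorem Finset.Nat.sum_antidiagonal_add_eq {M : Type*} [AddCommMonoid M] (f : ℕ × ℕ → M)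
    (m r : ℕ) (hf : ∀ j k, j < r → f (j, k) = 0) :
    ∑ p ∈ antidiagonal (m + r), f p = ∑ p ∈ antidiagonal m, f (p.1 + r, p.2) := by
  induction r generalizing f with
  | zero => rfl
  | succ r ih =>
    rw [← add_assoc, Nat.sum_antidiagonal_succ, hf 0 _ r.succ_pos, zero_add,
      ih (fun p => f (p.1 + 1, p.2)) fun j k h => hf _ _ (by omega)]
    simp only [add_assoc]

noncomputable def Fcoeff (j k : ℕ) : ℝ :=
  (2 * j + 4 * k)! / ((-4) ^ k * (2 * k)! * (2 * j)!)

theorem Fpoly_two_mul (m : ℕ) (x : ℝ) :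
    Fpoly (2 * m) x = ∑ p ∈ antidiagonal m, Fcoeff p.1 p.2 * x ^ p.1 := by
  rw [Nat.sum_antidiagonal_eq_sum_range_succ_mk, Fpoly, Nat.mul_div_cancel_left m two_pos]
  refine sum_congr rfl fun j hj => ?_
  obtain ⟨k, rfl⟩ := Nat.exists_eq_add_of_le (Nat.lt_succ_iff.mp (mem_range.mp hj))
  have hpoch := factorial_mul_ascPochhammer ℝ (2 * k) (2 * (j + k))
  rw [show 2 * k + 2 * (j + k) = 2 * j + 4 * k by ring] at hpoch
  rw [Nat.add_sub_cancel_left, show 2 * (j + k) - (2 * (j + k) - 2 * j) = 2 * j by omega,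
    show (j : ℤ) - ((j + k : ℕ) : ℤ) = -(k : ℤ) by push_cast; ring, zpow_neg, zpow_natCast,
    show 2 * ((j + k : ℕ) : ℝ) - 2 * j + 1 = ((2 * k : ℕ) : ℝ) + 1 by push_cast; ring,
    Fcoeff, ← hpoch]
  have : ((2 * k)! : ℝ) ≠ 0 := by positivity
  field_simp

/-- `Fcoeff (j - r) k / Fcoeff j k`, which vanishes when `j < r`. -/
noncomputable def ratioFst (r j k : ℕ) : ℝ :=
  (2 * j).descFactorial (2 * r) / (2 * j + 4 * k).descFactorial (2 * r)

/-- `Fcoeff j (k - 1) / Fcoeff j k`, which vanishes when `k = 0`. -/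
noncomputable def ratioSnd (j k : ℕ) : ℝ :=
  -4 * (2 * k).descFactorial 2 / (2 * j + 4 * k).descFactorial 4

theorem Fcoeff_eq_ratioFst_mul (r j k : ℕ) :
    Fcoeff j k = ratioFst r (j + r) k * Fcoeff (j + r) k := by
  have h1 := Nat.cast_factorial_add (R := ℝ) (2 * j) (2 * r)
  have h2 := Nat.cast_factorial_add (R := ℝ) (2 * j + 4 * k) (2 * r)
  rw [show 2 * j + 2 * r = 2 * (j + r) by ring] at h1
  rw [show 2 * j + 4 * k + 2 * r = 2 * (j + r) + 4 * k by ring] at h2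
  have h3 : ((2 * (j + r) + 4 * k).descFactorial (2 * r) : ℝ) ≠ 0 := by
    exact_mod_cast (Nat.descFactorial_pos.mpr (by omega)).ne'
  rw [Fcoeff, Fcoeff, ratioFst, h1, h2]
  have : ((2 * k)! : ℝ) ≠ 0 := by positivity
  have : ((2 * j)! : ℝ) ≠ 0 := by positivity
  field_simp

theorem Fcoeff_eq_ratioSnd_mul (j k : ℕ) :
    Fcoeff j k = ratioSnd j (k + 1) * Fcoeff j (k + 1) := by
  have h1 := Nat.cast_factorial_add (R := ℝ) (2 * k) 2
  have h2 := Nat.cast_factorial_add (R := ℝ) (2 * j + 4 * k) 4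
  rw [show 2 * k + 2 = 2 * (k + 1) by ring] at h1
  rw [show 2 * j + 4 * k + 4 = 2 * j + 4 * (k + 1) by ring] at h2
  have h3 : ((2 * j + 4 * (k + 1)).descFactorial 4 : ℝ) ≠ 0 := by
    exact_mod_cast (Nat.descFactorial_pos.mpr (by omega)).ne'
  have h4 : ((2 * (k + 1)).descFactorial 2 : ℝ) ≠ 0 := by
    exact_mod_cast (Nat.descFactorial_pos.mpr (by omega)).ne'
  rw [Fcoeff, Fcoeff, ratioSnd, h1, h2]
  have : ((2 * k)! : ℝ) ≠ 0 := by positivity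
  have : ((2 * j)! : ℝ) ≠ 0 := by positivity
  field_simp
  ring

theorem sum_Fcoeff_eq_sum_ratioSnd (m : ℕ) (x : ℝ) :
    ∑ p ∈ antidiagonal m, Fcoeff p.1 p.2 * x ^ p.1 =
      ∑ p ∈ antidiagonal (m + 1), ratioSnd p.1 p.2 * Fcoeff p.1 p.2 * x ^ p.1 := by
  rw [Nat.sum_antidiagonal_succ']
  simp only [ratioSnd, mul_zero, Nat.descFactorial_of_lt two_pos, Nat.cast_zero, zero_div,
    zero_mul, zero_add]
  refine sum_congr rfl fun p _ => ?_
  rw [Fcoeff_eq_ratioSnd_mul p.1 p.2, ratioSnd]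

theorem pow_mul_sum_Fcoeff (r m : ℕ) (x : ℝ) :
    x ^ r * ∑ p ∈ antidiagonal m, Fcoeff p.1 p.2 * x ^ p.1 =
      ∑ p ∈ antidiagonal (m + r), ratioFst r p.1 p.2 * Fcoeff p.1 p.2 * x ^ p.1 := by
  rw [Nat.sum_antidiagonal_add_eq _ m r fun j k h => by
    rw [ratioFst, Nat.descFactorial_of_lt (by omega), Nat.cast_zero, zero_div, zero_mul, zero_mul]]
  rw [mul_sum]
  refine sum_congr rfl fun p _ => ?_
  rw [Fcoeff_eq_ratioFst_mul r, pow_add]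
  ring

theorem ratio_combination_eq_zero (n j k : ℕ) (h : j + k = n + 2) :
    (4 * (n : ℝ) + 3) + (4 * n + 5) * (16 * n ^ 2 + 40 * n + 21) * ratioSnd j k
      - 2 * (4 * n + 5) * ratioFst 1 j k + (4 * n + 7) * ratioFst 2 j k = 0 := by
  have h2 : ((2 * j + 4 * k).descFactorial 2 : ℝ) ≠ 0 := by
    exact_mod_cast (Nat.descFactorial_pos.mpr (by omega)).ne'
  have h4 : ((2 * j + 4 * k).descFactorial 4 : ℝ) ≠ 0 := by
    exact_mod_cast (Nat.descFactorial_pos.mpr (by omega)).ne'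
  have hn : (n : ℝ) = j + k - 2 := by
    rw [eq_sub_iff_add_eq]; exact_mod_cast h.symm
  rw [ratioSnd, ratioFst, ratioFst, hn]
  field_simp
  simp only [Nat.mul_one, show 2 * 2 = 4 from rfl, ← descPochhammer_eval_eq_descFactorial ℝ,
    descPochhammer_succ_eval, descPochhammer_zero, Polynomial.eval_one]
  push_cast
  ring

theorem sum_ratio_combination_eq_zero (n : ℕ) (x : ℝ) :
    (4 * (n : ℝ) + 3) * ∑ p ∈ antidiagonal (n + 2), Fcoeff p.1 p.2 * x ^ p.1 +
      (4 * n + 5) * (16 * n ^ 2 + 40 * n + 21) *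
        ∑ p ∈ antidiagonal (n + 2), ratioSnd p.1 p.2 * Fcoeff p.1 p.2 * x ^ p.1 -
      2 * (4 * n + 5) *
        ∑ p ∈ antidiagonal (n + 2), ratioFst 1 p.1 p.2 * Fcoeff p.1 p.2 * x ^ p.1 +
      (4 * n + 7) *
        ∑ p ∈ antidiagonal (n + 2), ratioFst 2 p.1 p.2 * Fcoeff p.1 p.2 * x ^ p.1 = 0 := by
  simp only [mul_sum, ← sum_add_distrib, ← sum_sub_distrib]
  refine sum_eq_zero fun p hp => ?_
  linear_combination (Fcoeff p.1 p.2 * x ^ p.1) *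
    ratio_combination_eq_zero n p.1 p.2 (mem_antidiagonal.mp hp)

theorem Fpoly_recurrence_general (n : ℕ) (lam : ℝ) :
    (4 * (n : ℝ) + 3) * Fpoly (2 * n + 4) lam +
      (4 * (n : ℝ) + 5) * (16 * (n : ℝ) ^ 2 + 40 * (n : ℝ) - 2 * lam + 21) *
        Fpoly (2 * n + 2) lam +
      (4 * (n : ℝ) + 7) * lam ^ 2 * Fpoly (2 * n) lam = 0 := by
  have hF4 : Fpoly (2 * n + 4) lam = ∑ p ∈ antidiagonal (n + 2), Fcoeff p.1 p.2 * lam ^ p.1 := by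
    rw [show 2 * n + 4 = 2 * (n + 2) by ring, Fpoly_two_mul]
  have hF2 : Fpoly (2 * n + 2) lam =
      ∑ p ∈ antidiagonal (n + 2), ratioSnd p.1 p.2 * Fcoeff p.1 p.2 * lam ^ p.1 := by
    rw [show 2 * n + 2 = 2 * (n + 1) by ring, Fpoly_two_mul, sum_Fcoeff_eq_sum_ratioSnd]
  have hxF2 : lam * Fpoly (2 * n + 2) lam =
      ∑ p ∈ antidiagonal (n + 2), ratioFst 1 p.1 p.2 * Fcoeff p.1 p.2 * lam ^ p.1 := by
    rw [show 2 * n + 2 = 2 * (n + 1) by ring, Fpoly_two_mul, ← pow_mul_sum_Fcoeff 1 (n + 1),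
      pow_one]
  have hx2F0 : lam ^ 2 * Fpoly (2 * n) lam =
      ∑ p ∈ antidiagonal (n + 2), ratioFst 2 p.1 p.2 * Fcoeff p.1 p.2 * lam ^ p.1 := by
    rw [Fpoly_two_mul, pow_mul_sum_Fcoeff]
  rw [hF4]
  linear_combination sum_ratio_combination_eq_zero n lam +
    (4 * (n : ℝ) + 5) * (16 * n ^ 2 + 40 * n + 21) * hF2 - 2 * (4 * (n : ℝ) + 5) * hxF2 +
    (4 * (n : ℝ) + 7) * hx2F0

/-- The second-order recurrence satisfied by the polynomials `F_{2n}(λ)`: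
`(4n+3) F_{2n+4}(λ) + (4n+5)(16n²+40n−2λ+21) F_{2n+2}(λ) + (4n+7) λ² F_{2n}(λ) = 0`. -/
theorem Fpoly_recurrence (n : ℕ) (hn : 1 ≤ n) (lam : ℝ) :
    (4 * (n : ℝ) + 3) * Fpoly (2 * n + 4) lam +
      (4 * (n : ℝ) + 5) * (16 * (n : ℝ) ^ 2 + 40 * (n : ℝ) - 2 * lam + 21) *
        Fpoly (2 * n + 2) lam +
      (4 * (n : ℝ) + 7) * lam ^ 2 * Fpoly (2 * n) lam = 0 :=
  Fpoly_recurrence_general n lam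
end

section
/- Let n ≥ 2 be an integer. If λ ∈ ℝ is a root of F_n with λ > (1/2)·f_1(n), where f_1(n) = n(n−1)(n+1)(n+2)/8, then F_{n+1}(λ) < 0. -/
open Finset Polynomial
open scoped Nat

section Alternating

variable {E : Type*} [Ring E]

theorem alternating_sum_range_add_two (M : ℕ) (a : ℕ → E) :
    ∑ k ∈ range (M + 2), (-1) ^ k * a k = ∑ k ∈ range M, (-1) ^ k * a (k + 2) + (a 0 - a 1) := by
  rw [sum_range_succ', sum_range_succ']
  simp only [pow_succ, pow_zero, mul_neg, mul_one, neg_neg, neg_mul, one_mul, zero_add]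
  rw [add_assoc, neg_add_eq_sub]

variable [PartialOrder E] [IsOrderedRing E]

theorem alternating_sum_nonneg : ∀ (M : ℕ) (a : ℕ → E), (∀ k < M, 0 ≤ a k) →
    (∀ k, k + 1 < M → a (k + 1) ≤ a k) → 0 ≤ ∑ k ∈ range M, (-1) ^ k * a k
  | 0, _, _, _ => by simp
  | 1, a, hnonneg, _ => by simpa using hnonneg 0 one_pos
  | M + 2, a, hnonneg, hanti => by
    rw [alternating_sum_range_add_two]
    exact add_nonneg (alternating_sum_nonneg M (fun k => a (k + 2))
      (fun k hk => hnonneg (k + 2) (by omega)) (fun k hk => hanti (k + 2) (by omega)))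
      (sub_nonneg.2 (hanti 0 (by omega)))

theorem alternating_sum_pos (M : ℕ) (a : ℕ → E) (hM : 0 < M) (hpos : ∀ k < M, 0 < a k)
    (hanti : ∀ k, k + 1 < M → a (k + 1) < a k) : 0 < ∑ k ∈ range M, (-1) ^ k * a k := by
  obtain rfl | ⟨M, rfl⟩ : M = 1 ∨ ∃ M', M = M' + 2 := by
    rcases M with _ | _ | M <;> simp_all
  · simpa using hpos 0 one_pos
  · rw [alternating_sum_range_add_two]
    exact add_pos_of_nonneg_of_pos (alternating_sum_nonneg M (fun k => a (k + 2))
      (fun k hk => (hpos (k + 2) (by omega)).le) (fun k hk => (hanti (k + 2) (by omega)).le))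
      (sub_pos.2 (hanti 0 (by omega)))

end Alternating

theorem ascPochhammer_succ_eval_sub_eval_sub_one {R : Type*} [CommRing R] (m : ℕ) (x : R) :
    (ascPochhammer R (m + 1)).eval x - (ascPochhammer R (m + 1)).eval (x - 1)
      = (m + 1) * (ascPochhammer R m).eval x := by
  rw [ascPochhammer_succ_eval, ascPochhammer_succ_left, eval_mul, eval_comp]
  simp only [eval_X, eval_add, eval_one, sub_add_cancel]
  ring

theorem ascPochhammer_add_four_eval {R : Type*} [CommSemiring R] (m : ℕ) (x : R) :
    (ascPochhammer R (m + 4)).eval x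
      = x * (x + 1) * (x + 2 + m) * (x + 3 + m) * (ascPochhammer R m).eval (x + 2) := by
  rw [ascPochhammer_succ_left, ascPochhammer_succ_left]
  simp only [eval_mul, eval_comp, eval_X, eval_add, eval_one, ascPochhammer_succ_eval]
  rw [add_assoc x 1 1, one_add_one_eq_two]
  push_cast
  ring

/-- The paper's `f_k(n)`. -/
noncomputable def fCoeff (n k : ℕ) : ℝ :=
  (ascPochhammer ℝ (4 * k)).eval ((n : ℝ) - 2 * k + 1) / (4 ^ k * (2 * k)!)

theorem fCoeff_zero (n : ℕ) : fCoeff n 0 = 1 := by simp [fCoeff]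

theorem fCoeff_one (n : ℕ) :
    fCoeff n 1 = (n : ℝ) * ((n : ℝ) - 1) * ((n : ℝ) + 1) * ((n : ℝ) + 2) / 8 := by
  simp only [fCoeff, show 4 * 1 = 0 + 1 + 1 + 1 + 1 from rfl, ascPochhammer_succ_eval,
    ascPochhammer_zero, eval_one]
  norm_num
  ring

theorem fCoeff_pos {n k : ℕ} (h : 2 * k ≤ n) : 0 < fCoeff n k := by
  have : (2 * k : ℝ) ≤ n := by exact_mod_cast h
  exact div_pos (ascPochhammer_pos _ _ (by linarith)) (by positivity)

theorem fCoeff_eq_zero_of_lt {n k : ℕ} (h : n < 2 * k) : fCoeff n k = 0 := by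
  have harg : (n : ℝ) - 2 * k + 1 = -((2 * k - n - 1 : ℕ) : ℝ) := by
    rw [Nat.cast_sub (by omega), Nat.cast_sub (by omega)]
    push_cast
    ring
  rw [fCoeff, harg, ascPochhammer_eval_neg_coe_nat_of_lt (by omega), zero_div]

theorem ascPochhammer_eval_div_factorial_eq_fCoeff {n k : ℕ} (h : 2 * k ≤ n) :
    (ascPochhammer ℝ n).eval (2 * (k : ℝ) + 1) / ((n - 2 * k)! : ℝ) = 4 ^ k * fCoeff n k := by
  have hleft := factorial_mul_ascPochhammer ℝ (2 * k) n
  have hright := factorial_mul_ascPochhammer ℝ (n - 2 * k) (4 * k)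
  rw [show n - 2 * k + 4 * k = 2 * k + n by omega, Nat.cast_sub h] at hright
  push_cast at hleft hright
  rw [fCoeff, div_eq_iff (by positivity)]
  field_simp
  linear_combination hleft - hright

theorem Fpoly_eq_sum (n : ℕ) (x : ℝ) :
    Fpoly n x = ∑ k ∈ range (n / 2 + 1), (-1) ^ k * fCoeff n k * x ^ (n / 2 - k) := by
  rw [Fpoly, ← sum_range_reflect]
  refine sum_congr rfl fun k hk => ?_
  have hk : 2 * k ≤ n := by rw [mem_range] at hk; omega
  have hexp : (((n / 2 + 1 - 1 - k : ℕ) : ℤ) - (n / 2 : ℕ)) = -(k : ℤ) := by omega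
  have harg : 2 * ((n / 2 : ℕ) : ℝ) - 2 * ((n / 2 + 1 - 1 - k : ℕ) : ℝ) + 1 = 2 * (k : ℝ) + 1 := by
    rw [Nat.cast_sub (by omega)]
    push_cast
    ring
  have hfact : n - (2 * (n / 2) - 2 * (n / 2 + 1 - 1 - k)) = n - 2 * k := by omega
  have hsign : ((-4 : ℝ) ^ (-(k : ℤ))) * 4 ^ k = (-1) ^ k := by
    rw [zpow_neg, zpow_natCast, neg_pow, mul_inv, mul_assoc, inv_mul_cancel₀ (by positivity),
      mul_one, ← inv_pow, inv_neg, inv_one]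
  rw [hexp, harg, hfact, ascPochhammer_eval_div_factorial_eq_fCoeff hk,
    show n / 2 + 1 - 1 - k = n / 2 - k by omega, ← hsign]
  ring

theorem Fpoly_mul_pow_eq_sum {n m : ℕ} (hm : n / 2 ≤ m) (x : ℝ) :
    x ^ (m - n / 2) * Fpoly n x = ∑ k ∈ range (m + 1), (-1) ^ k * fCoeff n k * x ^ (m - k) := by
  calc x ^ (m - n / 2) * Fpoly n x
      = ∑ k ∈ range (n / 2 + 1), (-1) ^ k * fCoeff n k * x ^ (m - k) := by
        rw [Fpoly_eq_sum, mul_sum]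
        refine sum_congr rfl fun k hk => ?_
        rw [mem_range] at hk
        rw [show m - k = (m - n / 2) + (n / 2 - k) by omega, pow_add]
        ring
    _ = ∑ k ∈ range (m + 1), (-1) ^ k * fCoeff n k * x ^ (m - k) := by
        refine sum_subset (range_subset_range.2 (by omega)) fun k _ hk => ?_
        rw [mem_range] at hk
        rw [fCoeff_eq_zero_of_lt (by omega), mul_zero, zero_mul]

noncomputable def gCoeff (n k : ℕ) : ℝ := fCoeff (n + 1) k - fCoeff n k

theorem Fpoly_succ_sub_eq_sum (n : ℕ) (x : ℝ) :
    Fpoly (n + 1) x - x ^ ((n + 1) / 2 - n / 2) * Fpoly n x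
      = ∑ k ∈ range ((n + 1) / 2 + 1), (-1) ^ k * gCoeff n k * x ^ ((n + 1) / 2 - k) := by
  have hsucc := Fpoly_mul_pow_eq_sum (le_refl ((n + 1) / 2)) x
  rw [Nat.sub_self, pow_zero, one_mul] at hsucc
  rw [hsucc, Fpoly_mul_pow_eq_sum (by omega), ← sum_sub_distrib]
  refine sum_congr rfl fun k _ => ?_
  rw [gCoeff]
  ring

theorem gCoeff_succ (n k : ℕ) :
    gCoeff n (k + 1) = (4 * k + 4) * (ascPochhammer ℝ (4 * k + 3)).eval ((n : ℝ) - 2 * k)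
      / (4 ^ (k + 1) * (2 * k + 2)!) := by
  have h := ascPochhammer_succ_eval_sub_eval_sub_one (4 * k + 3) ((n : ℝ) - 2 * k)
  rw [gCoeff, fCoeff, fCoeff, ← sub_div, show 4 * (k + 1) = 4 * k + 3 + 1 by ring,
    show 2 * (k + 1) = 2 * k + 2 by ring]
  push_cast at h ⊢
  rw [show (n : ℝ) + 1 - 2 * (k + 1) + 1 = n - 2 * k by ring,
    show (n : ℝ) - 2 * (k + 1) + 1 = n - 2 * k - 1 by ring, h]
  ring

theorem Fpoly_succ_eq_of_root {n : ℕ} {x : ℝ} (hx : Fpoly n x = 0) :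
    Fpoly (n + 1) x
      = -∑ k ∈ range ((n + 1) / 2), (-1) ^ k * (gCoeff n (k + 1) * x ^ ((n + 1) / 2 - 1 - k)) := by
  have h := Fpoly_succ_sub_eq_sum n x
  rw [hx, mul_zero, sub_zero, sum_range_succ', gCoeff, fCoeff_zero, fCoeff_zero, sub_self,
    mul_zero, zero_mul, add_zero] at h
  rw [h, ← sum_neg_distrib]
  refine sum_congr rfl fun k _ => ?_
  rw [show (n + 1) / 2 - (k + 1) = (n + 1) / 2 - 1 - k by omega, pow_succ]
  ring

theorem gCoeff_succ_pos {n k : ℕ} (h : 2 * k < n) : 0 < gCoeff n (k + 1) := by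
  have : (2 * k : ℝ) < n := by exact_mod_cast h
  rw [gCoeff_succ]
  exact div_pos (mul_pos (by positivity) (ascPochhammer_pos _ _ (by linarith))) (by positivity)

theorem gCoeff_succ_succ_mul_eq (n k : ℕ) :
    gCoeff n (k + 2) * (8 * (k + 1) * (2 * k + 3))
      = ((n : ℝ) - 2 * k - 2) * (n - 2 * k - 1) * (n + 2 * k + 3) * (n + 2 * k + 4)
        * gCoeff n (k + 1) := by
  rw [show k + 2 = k + 1 + 1 from rfl, gCoeff_succ, gCoeff_succ,
    show 4 * (k + 1) + 3 = 4 * k + 3 + 4 by ring, ascPochhammer_add_four_eval,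
    show 2 * (k + 1) + 2 = 2 * k + 2 + 1 + 1 by ring, Nat.factorial_succ, Nat.factorial_succ]
  push_cast
  rw [show (n : ℝ) - 2 * (k + 1) + 2 = n - 2 * k by ring]
  field_simp
  ring

theorem gCoeff_ratio_numerator_le (n k : ℝ) (hk : 0 ≤ k) (hn : 2 * k + 3 ≤ n) :
    (n - 2 * k - 2) * (n - 2 * k - 1) * (n + 2 * k + 3) * (n + 2 * k + 4)
      ≤ n * (n - 1) * (n + 1) * (n + 2) / 8 / 2 * (8 * (k + 1) * (2 * k + 3)) := by
  have hA : 0 ≤ (n - 2 * k - 2) * (n + 2 * k + 4) := by nlinarith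
  have hA' : (n - 2 * k - 2) * (n + 2 * k + 4) ≤ n * (n + 2) := by nlinarith
  have hB : 0 ≤ (n - 2 * k - 1) * (n + 2 * k + 3) := by nlinarith
  have hB' : (n - 2 * k - 1) * (n + 2 * k + 3) ≤ (n - 1) * (n + 3) := by nlinarith
  have hAB := mul_le_mul hA' hB' hB (by nlinarith)
  have hC : 0 ≤ n * (n + 2) * (n - 1) :=
    mul_nonneg (mul_nonneg (by linarith) (by linarith)) (by linarith)
  have hD : 2 * (n + 3) ≤ (n + 1) * ((k + 1) * (2 * k + 3)) := by nlinarith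
  nlinarith [mul_le_mul_of_nonneg_left hD hC]

theorem gCoeff_succ_succ_le {n k : ℕ} (h : 2 * k + 3 ≤ n) :
    gCoeff n (k + 2) ≤ fCoeff n 1 / 2 * gCoeff n (k + 1) := by
  have hD : (0 : ℝ) < 8 * (k + 1) * (2 * k + 3) := by positivity
  have hnum := gCoeff_ratio_numerator_le n k k.cast_nonneg (by exact_mod_cast h)
  rw [← fCoeff_one] at hnum
  refine le_of_mul_le_mul_right ?_ hD
  rw [gCoeff_succ_succ_mul_eq]
  nlinarith [(gCoeff_succ_pos (n := n) (k := k) (by omega)).le]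

/-- If `n ≥ 2` and `λ` is a root of `F_n` with `λ > (1/2) f_1(n)`, where
`f_1(n) = n(n−1)(n+1)(n+2)/8`, then `F_{n+1}(λ) < 0`. -/
theorem Fpoly_succ_neg (n : ℕ) (hn : 2 ≤ n) (lam : ℝ) (hroot : Fpoly n lam = 0)
    (hgt : lam > (1 / 2) * ((n : ℝ) * ((n : ℝ) - 1) * ((n : ℝ) + 1) * ((n : ℝ) + 2) / 8)) :
    Fpoly (n + 1) lam < 0 := by
  set M := (n + 1) / 2
  have hlam : fCoeff n 1 / 2 < lam := by rw [fCoeff_one]; linarith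
  have hlam_pos : 0 < lam := (half_pos (fCoeff_pos (by omega))).trans hlam
  rw [Fpoly_succ_eq_of_root hroot, neg_lt_zero]
  refine alternating_sum_pos M _ (by omega) (fun k hk => ?_) (fun k hk => ?_)
  · exact mul_pos (gCoeff_succ_pos (by omega)) (pow_pos hlam_pos _)
  · calc gCoeff n (k + 2) * lam ^ (M - 1 - (k + 1))
        ≤ fCoeff n 1 / 2 * gCoeff n (k + 1) * lam ^ (M - 1 - (k + 1)) := by
          gcongr
          exact gCoeff_succ_succ_le (by omega)
      _ < lam * gCoeff n (k + 1) * lam ^ (M - 1 - (k + 1)) := by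
          gcongr
          exact gCoeff_succ_pos (by omega)
      _ = gCoeff n (k + 1) * lam ^ (M - 1 - k) := by
          rw [show M - 1 - k = M - 1 - (k + 1) + 1 by omega, pow_succ]
          ring
end

section
/- For every nonnegative integer n and every real (or indeterminate) μ, the determinant of the n×n matrix with (i,j) entry c^{(0)}_{i,j} = 2 − δ_{i,j}·2μ/(4i+1) (for 1 ≤ i,j ≤ n) equals ((−1)^n / (2^n · (5/4)_n)) · μ^{n−1} · (μ − 2n² − 3n). -/
/-!
Multiplying row `i` of `C^{(0)}_n` by `aᵢ = 4i + 1` turns it into `2 a 𝟙ᵀ - 2μ I`, a rank-one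
matrix minus a scalar one. Its determinant is, up to the sign `(-1)^n`, the characteristic
polynomial of the rank-one matrix `2 a 𝟙ᵀ` at `2μ`, namely `(2μ)^n - 2 (∑ aᵢ) (2μ)^(n-1)`. Finally
`∑ aᵢ = 2n² + 3n` and `∏ aᵢ = 4^n (5/4)_n`.
-/

open Matrix Finset

theorem Matrix.det_scalar_sub_vecMulVec {n R : Type*} [Fintype n] [DecidableEq n] [CommRing R]
    (t : R) (u v : n → R) :
    (scalar n t - vecMulVec u v).det =
      t ^ Fintype.card n - (u ⬝ᵥ v) * t ^ (Fintype.card n - 1) := by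
  rw [← eval_charpoly, charpoly_vecMulVec]
  simp

theorem Matrix.det_const_sub_diagonal_div {n K : Type*} [Fintype n] [DecidableEq n] [Field K]
    (c t : K) (d : n → K) (hd : ∀ i, d i ≠ 0) :
    (of fun i j => c - if i = j then t / d i else 0).det =
      (-1) ^ Fintype.card n * (t ^ Fintype.card n - c * (∑ i, d i) * t ^ (Fintype.card n - 1)) /
        ∏ i, d i := by
  have hscaled : diagonal d * of (fun i j => c - if i = j then t / d i else 0) =
      -(scalar n t - vecMulVec (fun i => c * d i) 1) := by
    ext i j
    by_cases hij : i = j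
    · subst hij
      simp only [diagonal_mul, of_apply, if_pos, mul_sub, mul_div_cancel₀ _ (hd i), scalar_apply,
        vecMulVec_one, neg_apply, sub_apply, diagonal_apply_eq, replicateCol_apply]
      ring
    · simp only [diagonal_mul, of_apply, if_neg hij, scalar_apply, vecMulVec_one, neg_apply,
        sub_apply, diagonal_apply_ne _ hij, replicateCol_apply]
      ring
  have hprod : ∏ i, d i ≠ 0 := prod_ne_zero_iff.mpr fun i _ => hd i
  rw [eq_div_iff hprod, mul_comm, ← det_diagonal, ← det_mul, hscaled, det_neg,
    det_scalar_sub_vecMulVec, dotProduct_one, ← mul_sum]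

theorem prod_four_mul_succ_add_one (n : ℕ) :
    ∏ i : Fin n, (4 * ((i : ℕ) + 1 : ℝ) + 1) = 4 ^ n * (ascPochhammer ℝ n).eval (5 / 4 : ℝ) := by
  induction n with
  | zero => simp
  | succ m ih =>
    simp only [Fin.prod_univ_castSucc, Fin.val_castSucc, Fin.val_last, ih, ascPochhammer_succ_eval]
    ring

theorem sum_four_mul_succ_add_one (n : ℕ) :
    ∑ i : Fin n, (4 * ((i : ℕ) + 1 : ℝ) + 1) = 2 * (n : ℝ) ^ 2 + 3 * n := by
  induction n with
  | zero => simp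
  | succ m ih =>
    simp only [Fin.sum_univ_castSucc, Fin.val_castSucc, Fin.val_last, ih]
    push_cast
    ring

/-- `det C^{(0)}_n = ((−1)^n/(2^n (5/4)_n)) μ^{n−1} (μ − 2n² − 3n)`, where the `(i,j)`
entry of `C^{(0)}_n` (for `1 ≤ i,j ≤ n`) is `2 − δ_{i,j} 2μ/(4i+1)`; for `n = 0` both
sides equal `1`. -/
theorem det_C0 (n : ℕ) (mu : ℝ) :
    Matrix.det (Matrix.of (fun i j : Fin n =>
      2 - (if i = j then 2 * mu / (4 * ((i : ℕ) + 1 : ℝ) + 1) else 0)))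
    = if n = 0 then 1 else
        (-1) ^ n / (2 ^ n * (ascPochhammer ℝ n).eval (5 / 4 : ℝ)) *
          mu ^ (n - 1) * (mu - 2 * (n : ℝ) ^ 2 - 3 * (n : ℝ)) := by
  rcases n with _ | m
  · simp
  rw [if_neg m.succ_ne_zero, det_const_sub_diagonal_div _ _ _ fun i => by positivity,
    prod_four_mul_succ_add_one, sum_four_mul_succ_add_one, Fintype.card_fin, Nat.add_sub_cancel]
  have hP : (ascPochhammer ℝ (m + 1)).eval (5 / 4 : ℝ) ≠ 0 :=
    (ascPochhammer_pos _ _ (by norm_num)).ne'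
  rw [show (4 : ℝ) ^ (m + 1) = 2 ^ (m + 1) * 2 ^ (m + 1) by rw [← mul_pow]; norm_num]
  field_simp
  ring
end

section
/- For every integer n ≥ 2, the largest real root μ_n of the polynomial μ ↦ det_{1≤i,j≤n}(1 + (−1)^{i+j} − δ_{i,j}·2μ/(2i+1)) is μ_n = n(n+3)/2 if n is even, and μ_n = n(n+3)/2 + 1 if n is odd. -/
/-!
Write `w i = 2 i + 1` and `c i` for the parity of `i` (with indices from `0`, as in `Fin n`,
the weight is `2 i + 3`). The matrix is `2 (P - diag (μ / w i))`, where `P i j = 1` when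
`c i = c j` and `0` otherwise. If `v` is a kernel vector and `T k` is the sum of `v` over the
class `k`, then `μ v i = w i T (c i)`; summing over a class gives `μ T k = W k T k` with `W k`
the total weight of the class. So every nonzero root is a class weight `W k`, and conversely
`W k` is a root, with the kernel vector `w` restricted to class `k`. The two class weights are
computed in closed form; the larger one is the weight of the class containing `n`.
-/

open Finset Matrix

section ClassMatrix

variable {ι κ K : Type*} [Fintype ι] [DecidableEq ι] [DecidableEq κ] [Field K]

def fiberSum (c : ι → κ) (v : ι → K) (k : κ) : K := ∑ i with c i = k, v i

def classMatrix (c : ι → κ) (w : ι → K) (x : K) : Matrix ι ι K :=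
  of (fun i j => if c i = c j then 1 else 0) - diagonal fun i => x / w i

variable {c : ι → κ} {w : ι → K} {x : K}

lemma classMatrix_mulVec (v : ι → K) (i : ι) :
    (classMatrix c w x *ᵥ v) i = fiberSum c v (c i) - x / w i * v i := by
  rw [classMatrix, sub_mulVec, Pi.sub_apply, mulVec_diagonal]
  simp [mulVec, dotProduct, fiberSum, sum_filter, eq_comm]

lemma exists_eq_fiberSum_of_det_classMatrix_eq_zero (hw : ∀ i, w i ≠ 0) (hx : x ≠ 0)
    (h : (classMatrix c w x).det = 0) : ∃ i, x = fiberSum c w (c i) := by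
  obtain ⟨v, hv0, hv⟩ := exists_mulVec_eq_zero_iff.mpr h
  have key : ∀ i, x * v i = w i * fiberSum c v (c i) := by
    intro i
    have := congrFun hv i
    rw [classMatrix_mulVec, Pi.zero_apply, sub_eq_zero, div_mul_eq_mul_div,
      eq_div_iff (hw i)] at this
    linear_combination -this
  obtain ⟨i, hi⟩ := Function.ne_iff.mp hv0
  have hT : fiberSum c v (c i) ≠ 0 := by
    intro h0
    have := key i
    rw [h0, mul_zero] at this
    exact hi ((mul_eq_zero.mp this).resolve_left hx)
  refine ⟨i, mul_right_cancel₀ hT ?_⟩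
  calc x * fiberSum c v (c i) = ∑ j with c j = c i, x * v j := mul_sum ..
    _ = ∑ j with c j = c i, w j * fiberSum c v (c i) :=
        sum_congr rfl fun j hj => by rw [key, (mem_filter.mp hj).2]
    _ = fiberSum c w (c i) * fiberSum c v (c i) := (sum_mul ..).symm

lemma det_classMatrix_fiberSum_eq_zero (hw : ∀ i, w i ≠ 0) (i₀ : ι) :
    (classMatrix c w (fiberSum c w (c i₀))).det = 0 := by
  rw [← exists_mulVec_eq_zero_iff]
  refine ⟨fun j => if c j = c i₀ then w j else 0, fun h => hw i₀ (by simpa using congrFun h i₀),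
    funext fun i => ?_⟩
  rw [classMatrix_mulVec, Pi.zero_apply]
  by_cases hi : c i = c i₀
  · have : fiberSum c (fun j => if c j = c i₀ then w j else 0) (c i) = fiberSum c w (c i₀) := by
      rw [hi]
      exact sum_congr rfl fun j hj => if_pos (mem_filter.mp hj).2
    rw [this, if_pos hi, div_mul_cancel₀ _ (hw i), sub_self]
  · have : fiberSum c (fun j => if c j = c i₀ then w j else 0) (c i) = 0 :=
      sum_eq_zero fun j hj => if_neg (by rw [(mem_filter.mp hj).2]; exact hi)
    rw [this, if_neg hi, mul_zero, sub_zero]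

end ClassMatrix

lemma one_add_neg_one_pow_succ_add_succ (i j : ℕ) :
    1 + (-1 : ℝ) ^ ((i + 1) + (j + 1)) = 2 * if i % 2 = j % 2 then 1 else 0 := by
  rcases Nat.mod_two_eq_zero_or_one i with hi | hi <;>
  rcases Nat.mod_two_eq_zero_or_one j with hj | hj <;>
  simp [pow_add, hi, hj, neg_one_pow_eq_pow_mod_two (n := i),
    neg_one_pow_eq_pow_mod_two (n := j)] <;> norm_num

lemma of_eq_two_smul_classMatrix (n : ℕ) (x : ℝ) :
    Matrix.of (fun i j : Fin n =>
        1 + (-1 : ℝ) ^ (((i : ℕ) + 1) + ((j : ℕ) + 1)) -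
          (if i = j then 2 * x / (2 * ((i : ℕ) + 1 : ℝ) + 1) else 0)) =
      (2 : ℝ) • classMatrix (fun i : Fin n => (i : ℕ) % 2) (fun i => 2 * (i : ℝ) + 3) x := by
  ext i j
  simp only [of_apply, Matrix.smul_apply, classMatrix, Matrix.sub_apply, diagonal_apply,
    one_add_neg_one_pow_succ_add_succ, smul_eq_mul]
  split_ifs <;> ring

lemma sum_range_even_weights (n : ℕ) :
    ∑ i ∈ range n, (if i % 2 = 0 then 2 * (i : ℝ) + 3 else 0) =
      if Even n then (n : ℝ) * (n + 1) / 2 else ((n : ℝ) + 1) * (n + 2) / 2 := by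
  induction n with
  | zero => simp
  | succ n ih =>
    rw [sum_range_succ, ih]
    by_cases hn : Even n <;>
      simp only [hn, Nat.even_add_one, ← Nat.even_iff, if_true, if_false, not_true_eq_false,
        not_false_eq_true] <;> push_cast <;> ring

lemma sum_range_odd_weights (n : ℕ) :
    ∑ i ∈ range n, (if i % 2 = 1 then 2 * (i : ℝ) + 3 else 0) =
      if Even n then (n : ℝ) * (n + 3) / 2 else ((n : ℝ) - 1) * (n + 2) / 2 := by
  induction n with
  | zero => simp
  | succ n ih =>
    rw [sum_range_succ, ih]
    by_cases hn : Even n <;>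
      simp only [hn, Nat.even_add_one, ← Nat.odd_iff, ← Nat.not_even_iff_odd, if_true, if_false,
        not_true_eq_false, not_false_eq_true] <;> push_cast <;> ring

lemma fiberSum_parity (n k : ℕ) :
    fiberSum (fun i : Fin n => (i : ℕ) % 2) (fun i => 2 * (i : ℝ) + 3) k =
      ∑ i ∈ range n, (if i % 2 = k then 2 * (i : ℝ) + 3 else 0) := by
  rw [fiberSum, sum_filter,
    Fin.sum_univ_eq_sum_range (fun i => if i % 2 = k then 2 * (i : ℝ) + 3 else 0)]

lemma isGreatest_det_classMatrix_parity_eq_zero {n : ℕ} (hn : 2 ≤ n) :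
    IsGreatest {x : ℝ |
      (classMatrix (fun i : Fin n => (i : ℕ) % 2) (fun i => 2 * (i : ℝ) + 3) x).det = 0}
      (if Even n then (n : ℝ) * (n + 3) / 2 else (n : ℝ) * (n + 3) / 2 + 1) := by
  have hw : ∀ i : Fin n, 2 * (i : ℝ) + 3 ≠ 0 := fun i => by positivity
  have hW0 := sum_range_even_weights n
  have hW1 := sum_range_odd_weights n
  rw [← fiberSum_parity] at hW0 hW1
  have hn' : (2 : ℝ) ≤ n := by exact_mod_cast hn
  refine ⟨?_, fun x hx => ?_⟩
  · by_cases he : Even n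
    · rw [if_pos he]
      have := det_classMatrix_fiberSum_eq_zero (c := fun i : Fin n => (i : ℕ) % 2) hw ⟨1, hn⟩
      rwa [Nat.one_mod, hW1, if_pos he] at this
    · have := det_classMatrix_fiberSum_eq_zero (c := fun i : Fin n => (i : ℕ) % 2) hw ⟨0, by omega⟩
      rw [Nat.zero_mod, hW0, if_neg he] at this
      rwa [if_neg he, show (n : ℝ) * (n + 3) / 2 + 1 = (n + 1) * (n + 2) / 2 by ring]
  · by_cases hx0 : x = 0
    · split_ifs <;> nlinarith
    obtain ⟨i, rfl⟩ := exists_eq_fiberSum_of_det_classMatrix_eq_zero hw hx0 hx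
    rcases Nat.mod_two_eq_zero_or_one i with h | h <;> simp only [h, hW0, hW1] <;>
      split_ifs <;> nlinarith

/-- For `n ≥ 2`, the largest real root `μ_n` of the polynomial
`μ ↦ det_{1≤i,j≤n}(1 + (−1)^{i+j} − δ_{i,j} 2μ/(2i+1))` equals `n(n+3)/2` if `n` is even
and `n(n+3)/2 + 1` if `n` is odd. -/
theorem maxroot_det_C (n : ℕ) (hn : 2 ≤ n) (mu : ℝ)
    (hmu : IsGreatest {x : ℝ |
      Matrix.det (Matrix.of (fun i j : Fin n =>
        1 + (-1 : ℝ) ^ (((i : ℕ) + 1) + ((j : ℕ) + 1)) -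
          (if i = j then 2 * x / (2 * ((i : ℕ) + 1 : ℝ) + 1) else 0))) = 0} mu) :
    mu = if Even n then (n : ℝ) * ((n : ℝ) + 3) / 2
         else (n : ℝ) * ((n : ℝ) + 3) / 2 + 1 := by
  simp only [of_eq_two_smul_classMatrix, det_smul, mul_eq_zero, pow_eq_zero_iff',
    two_ne_zero, false_and, false_or] at hmu
  exact hmu.unique (isGreatest_det_classMatrix_parity_eq_zero hn)
end
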